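/- With C, t, T, index_T, F = Hom_C(t,−) as above: if c' → t_c →τ c →δ Σc' is a triangle in C with t_c ∈ T and Fδ = 0, then [t_c] = index_T(c') + index_T(c) in K_0^{sp}(T). -/

import Mathlib

open CategoryTheory Category Limits Pretriangulated Opposite

universe v u

section Defs

variable {C : Type u} [Category.{v} C]

section Add

variable [Preadditive C] [HasFiniteBiproducts C]

/-- `x` lies in `add t`: it is a direct summand of a finite direct sum of copies of `t`. -/
def inAdd (t x : C) : Prop :=
  ∃ (n : ℕ) (i : x ⟶ ⨁ (fun _ : Fin n => t)) (r : ⨁ (fun _ : Fin n => t) ⟶ x),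
    i ≫ r = 𝟙 x

end Add

/-- A morphism lies in the radical of the category. -/
def radMor [Preadditive C] {x y : C} (f : x ⟶ y) : Prop :=
  ∀ g : y ⟶ x, IsIso (𝟙 x - f ≫ g)

/-- An object is indecomposable. -/
def IndecObj [Preadditive C] [HasBinaryBiproducts C] (s : C) : Prop :=
  ¬ IsZero s ∧ ∀ (a b : C), (s ≅ a ⊞ b) → IsZero a ∨ IsZero b

/-- Every object has a precover by an object of `Tset` (contravariant finiteness). -/
def IsPrecovering (Tset : Set C) : Prop :=
  ∀ c : C, ∃ (x : C) (f : x ⟶ c), x ∈ Tset ∧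
    ∀ x' ∈ Tset, ∀ g : x' ⟶ c, ∃ h : x' ⟶ x, h ≫ f = g

/-- Every object has a preenvelope by an object of `Tset` (covariant finiteness). -/
def IsPreenveloping (Tset : Set C) : Prop :=
  ∀ c : C, ∃ (x : C) (f : c ⟶ x), x ∈ Tset ∧
    ∀ x' ∈ Tset, ∀ g : c ⟶ x', ∃ h : x ⟶ x', f ≫ h = g

/-- `f : x ⟶ c` is a `Tset`-cover: a right minimal `Tset`-approximation. -/
def IsTCover (Tset : Set C) {x c : C} (f : x ⟶ c) : Prop :=
  x ∈ Tset ∧ (∀ x' ∈ Tset, ∀ g : x' ⟶ c, ∃ h : x' ⟶ x, h ≫ f = g) ∧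
    ∀ φ : x ⟶ x, φ ≫ f = f → IsIso φ

section Shift

variable [Preadditive C] [HasShift C ℤ]

/-- `Tset` is an `n`-cluster tilting subcategory: it is functorially finite and coincides with
both `Ext^{1..n-1}`-orthogonals of itself. -/
structure IsClusterTiltingSub (n : ℕ) (Tset : Set C) : Prop where
  precovering : IsPrecovering Tset
  preenveloping : IsPreenveloping Tset
  mem_iff_ext₁ : ∀ c : C, c ∈ Tset ↔
    ∀ i : ℕ, 1 ≤ i → i ≤ n - 1 → ∀ x ∈ Tset, ∀ f : x ⟶ c⟦(i : ℤ)⟧, f = 0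
  mem_iff_ext₂ : ∀ c : C, c ∈ Tset ↔
    ∀ i : ℕ, 1 ≤ i → i ≤ n - 1 → ∀ x ∈ Tset, ∀ f : c ⟶ x⟦(i : ℤ)⟧, f = 0

/-- `t` is an `n`-cluster tilting object: `add t` is an `n`-cluster tilting subcategory. -/
def IsClusterTiltingObj [HasFiniteBiproducts C] (n : ℕ) (t : C) : Prop :=
  IsClusterTiltingSub n {x : C | inAdd t x}

end Shift

section Tri

variable [Preadditive C] [HasZeroObject C] [HasShift C ℤ]
  [∀ n : ℤ, (shiftFunctor C n).Additive] [Pretriangulated C]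

/-- The Iyama–Yoshino star operation `X * Y` on full subcategories. -/
def star (X Y : Set C) : Set C :=
  {c | ∃ (x y : C) (f : x ⟶ c) (g : c ⟶ y) (h : y ⟶ x⟦(1 : ℤ)⟧),
    Triangle.mk f g h ∈ (distTriang C) ∧ x ∈ X ∧ y ∈ Y}

/-- Iterated star operation `X₁ * X₂ * ⋯ * Xₘ`. -/
def starList : List (Set C) → Set C
  | [] => {c | IsZero c}
  | [X] => X
  | X :: Y :: L => star X (starList (Y :: L))

/-- A tower of triangles connecting the objects `cobj (m+1), cobj m, …, cobj 1, cobj 0`: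
triangles `w (i+1) ⟶ cobj (i+1) ⟶ w i ⟶ (w (i+1))⟦1⟧` for `i < m`, with
`w 0 = cobj 0` and `w m = cobj (m+1)`. -/
structure TriTower (m : ℕ) (cobj : ℕ → C) where
  w : ℕ → C
  fmor : ∀ i : ℕ, w (i + 1) ⟶ cobj (i + 1)
  gmor : ∀ i : ℕ, cobj (i + 1) ⟶ w i
  hmor : ∀ i : ℕ, w i ⟶ (w (i + 1))⟦(1 : ℤ)⟧
  mem : ∀ i < m, Triangle.mk (fmor i) (gmor i) (hmor i) ∈ distTriang C
  w_zero : w 0 = cobj 0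
  w_top : w m = cobj (m + 1)

/-- The composite `w 0 ⟶ Σʲ (w j)` of the (suitably shifted) wavy morphisms of a tower. -/
noncomputable def towerComp {m : ℕ} {cobj : ℕ → C} (tw : TriTower m cobj) :
    ∀ j : ℕ, (tw.w 0 ⟶ (tw.w j)⟦(j : ℤ)⟧)
  | 0 => (shiftFunctorZero' C ((0 : ℕ) : ℤ) (by simp)).inv.app (tw.w 0)
  | (j + 1) => towerComp tw j ≫ (shiftFunctor C (j : ℤ)).map (tw.hmor j) ≫
      (shiftFunctorAdd' C (1 : ℤ) (j : ℤ) ((j + 1 : ℕ) : ℤ) (by push_cast; ring)).inv.app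
        (tw.w (j + 1))

/-- The full composite `cobj 0 ⟶ Σᵐ (cobj (m+1))` of the wavy morphisms of a tower. -/
noncomputable def towerGamma {m : ℕ} {cobj : ℕ → C} (tw : TriTower m cobj) :
    cobj 0 ⟶ (cobj (m + 1))⟦(m : ℤ)⟧ :=
  eqToHom tw.w_zero.symm ≫ towerComp tw m ≫ eqToHom (by rw [tw.w_top])

/-- `cls` is constant on isomorphism classes of objects of `Tset` and additive on biproducts
of objects of `Tset`; quantifying over all such `cls` encodes identities in the split
Grothendieck group `K₀^{sp}(Tset)`. -/
def IsAddOn [HasFiniteBiproducts C] (Tset : Set C) {G : Type*} [AddCommGroup G]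
    (cls : C → G) : Prop :=
  (∀ x y : C, x ∈ Tset → y ∈ Tset → Nonempty (x ≅ y) → cls x = cls y) ∧
  (∀ x y : C, x ∈ Tset → y ∈ Tset → cls (x ⊞ y) = cls x + cls y)

/-- `ind` is the triangulated index with respect to `Tset`: for each `c` there is a tower of
triangles built from `Tset`-covers, and `ind c` is the alternating sum of the classes of its
`Tset`-objects. -/
def IsIndex [HasFiniteBiproducts C] (n : ℕ) (Tset : Set C) {G : Type*} [AddCommGroup G]
    (cls ind : C → G) : Prop :=
  ∀ c : C, ∃ (cobj : ℕ → C) (tw : TriTower (n - 1) cobj),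
    cobj 0 = c ∧ (∀ i < n - 1, IsTCover Tset (tw.gmor i)) ∧ cobj n ∈ Tset ∧
    ind c = ∑ i ∈ Finset.range n, ((-1 : ℤ) ^ i) • cls (cobj (i + 1))

/-- `ind` is the `(d+2)`-angulated index with respect to `Tset`: for each `s ∈ Sset` there is a
`(d+2)`-angle (encoded as a tower of triangles) `t_d → ⋯ → t_0 → s → Σ^d t_d` with `t_i ∈ Tset`
and radical maps, and `ind s` is the alternating sum of the classes of the `t_i`. -/
def IsHigherIndex [HasFiniteBiproducts C] (d : ℕ) (Tset Sset : Set C) {G : Type*}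
    [AddCommGroup G] (cls ind : C → G) : Prop :=
  ∀ s ∈ Sset, ∃ (cobj : ℕ → C) (tw : TriTower d cobj),
    cobj 0 = s ∧ (∀ i, 1 ≤ i → i ≤ d + 1 → cobj i ∈ Tset) ∧
    (∀ j : ℕ, j + 2 ≤ d → radMor (tw.gmor (j + 1) ≫ tw.fmor j)) ∧
    (∀ j : ℕ, (hj : j + 1 = d) →
      radMor ((eqToHom (show cobj (d + 1) = tw.w (j + 1) by rw [hj, tw.w_top]) :
        cobj (d + 1) ⟶ tw.w (j + 1)) ≫ tw.fmor j)) ∧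
    ind s = ∑ i ∈ Finset.range (d + 1), ((-1 : ℤ) ^ i) • cls (cobj (i + 1))

/-- `t` is an Oppermann–Thomas cluster tilting object of the `(d+2)`-angulated category `Sset`:
`Hom(t, Σ^d t) = 0`, and every `s ∈ Sset` admits a `(d+2)`-angle (encoded as a tower)
`t_d → ⋯ → t_0 → s → Σ^d t_d` with all `t_i ∈ add t`. -/
def IsOTClusterTilting [HasFiniteBiproducts C] (d : ℕ) (Sset : Set C) (t : C) : Prop :=
  t ∈ Sset ∧ (∀ f : t ⟶ t⟦(d : ℤ)⟧, f = 0) ∧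
    ∀ s ∈ Sset, ∃ (cobj : ℕ → C) (tw : TriTower d cobj),
      cobj 0 = s ∧ ∀ i, 1 ≤ i → i ≤ d + 1 → inAdd t (cobj i)

/-- A `N`-Calabi–Yau structure on `Sset`: a bifunctorial perfect pairing
`Hom(x,y) × Hom(y, x⟦N⟧) → k`, encoding natural isomorphisms `Hom(x,y) ≅ D Hom(y, x⟦N⟧)`. -/
structure CYData (k : Type*) [Field k] [Linear k C] (Sset : Set C) (N : ℤ) where
  pair : ∀ x y : C, (x ⟶ y) → (y ⟶ x⟦N⟧) → k
  add_left : ∀ x y, x ∈ Sset → y ∈ Sset → ∀ (f f' : x ⟶ y) (g : y ⟶ x⟦N⟧),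
    pair x y (f + f') g = pair x y f g + pair x y f' g
  add_right : ∀ x y, x ∈ Sset → y ∈ Sset → ∀ (f : x ⟶ y) (g g' : y ⟶ x⟦N⟧),
    pair x y f (g + g') = pair x y f g + pair x y f g'
  smul_left : ∀ x y, x ∈ Sset → y ∈ Sset → ∀ (a : k) (f : x ⟶ y) (g : y ⟶ x⟦N⟧),
    pair x y (a • f) g = a * pair x y f g
  smul_right : ∀ x y, x ∈ Sset → y ∈ Sset → ∀ (a : k) (f : x ⟶ y) (g : y ⟶ x⟦N⟧),
    pair x y f (a • g) = a * pair x y f g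
  assoc : ∀ x y z, x ∈ Sset → y ∈ Sset → z ∈ Sset →
    ∀ (f : x ⟶ y) (g : y ⟶ z) (h : z ⟶ x⟦N⟧),
    pair x z (f ≫ g) h = pair x y f (g ≫ h)
  nondeg_left : ∀ x y, x ∈ Sset → y ∈ Sset → ∀ f : x ⟶ y,
    (∀ g : y ⟶ x⟦N⟧, pair x y f g = 0) → f = 0
  nondeg_right : ∀ x y, x ∈ Sset → y ∈ Sset → ∀ g : y ⟶ x⟦N⟧,
    (∀ f : x ⟶ y, pair x y f g = 0) → g = 0

end Tri

end Defs

/-!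
Because `F δ = 0`, the map `τ : t_c ⟶ c` is a right `add t`-approximation. Such an approximation
`x ⟶ c` splits off the minimal one: if `w₁ ⟶ t₀ ⟶ c` is the first triangle of a tower of covers
computing the index of `c`, then `x ≅ t₀ ⊞ z` and the fibre `y` of `x ⟶ c` is `w₁ ⊞ z`. Adding
`z ⟶ z` to the next triangle `w₂ ⟶ t₁ ⟶ w₁` gives a triangle `w₂ ⟶ t₁ ⊞ z ⟶ y` of the same kind,
so by induction on the total length of the towers `[t₁] + [z] = index(w₂) + index(y)`, and
`[x] = [t₀] + [z] = index(c) + index(y)` because `index(c) = [t₀] - [t₁] + index(w₂)`.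
-/

variable {C : Type u} [Category.{v} C]

section Add

variable [Preadditive C] [HasFiniteBiproducts C]

attribute [local instance] hasBinaryBiproducts_of_finite_biproducts

lemma inAdd_of_retract {t x y : C} (i : y ⟶ x) (r : x ⟶ y) (hir : i ≫ r = 𝟙 y)
    (hx : inAdd t x) : inAdd t y := by
  obtain ⟨m, ix, rx, h⟩ := hx
  exact ⟨m, i ≫ ix, rx ≫ r, by simp [reassoc_of% h, hir]⟩

lemma inAdd_of_iso {t x y : C} (e : x ≅ y) (hx : inAdd t x) : inAdd t y :=
  inAdd_of_retract e.inv e.hom e.inv_hom_id hx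

lemma inAdd_of_isZero {t x : C} (hx : IsZero x) : inAdd t x :=
  ⟨0, 0, 0, hx.eq_of_src _ _⟩

lemma inAdd_biprod_biproduct (t : C) (m m' : ℕ) :
    inAdd t ((⨁ fun _ : Fin m => t) ⊞ ⨁ fun _ : Fin m' => t) := by
  refine ⟨m + m',
    biprod.desc
      (biproduct.desc fun i => biproduct.ι (fun _ : Fin (m + m') => t) (Fin.castAdd m' i))
      (biproduct.desc fun i => biproduct.ι (fun _ : Fin (m + m') => t) (Fin.natAdd m i)),
    biproduct.desc fun k => Fin.addCases (motive := fun _ => t ⟶ _)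
      (fun i => biproduct.ι (fun _ : Fin m => t) i ≫ biprod.inl)
      (fun i => biproduct.ι (fun _ : Fin m' => t) i ≫ biprod.inr) k, ?_⟩
  ext <;> simp

lemma inAdd_biprod {t x y : C} (hx : inAdd t x) (hy : inAdd t y) : inAdd t (x ⊞ y) := by
  obtain ⟨m, ix, rx, hxr⟩ := hx
  obtain ⟨m', iy, ry, hyr⟩ := hy
  exact inAdd_of_retract (biprod.map ix iy) (biprod.map rx ry)
    (by ext <;> simp [reassoc_of% hxr, reassoc_of% hyr]) (inAdd_biprod_biproduct t m m')

lemma comp_eq_zero_of_inAdd {t c d s : C} {f : c ⟶ d} (hf : ∀ g : t ⟶ c, g ≫ f = 0)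
    (hs : inAdd t s) (u : s ⟶ c) : u ≫ f = 0 := by
  obtain ⟨m, i, r, hir⟩ := hs
  have hr : r ≫ u ≫ f = 0 := biproduct.hom_ext' _ _ fun j => by
    simpa using hf (biproduct.ι (fun _ : Fin m => t) j ≫ r ≫ u)
  rw [← Category.id_comp u, ← hir, Category.assoc, Category.assoc, hr, comp_zero]

end Add

section Triangles

variable [Preadditive C] [HasZeroObject C] [HasShift C ℤ]
  [∀ n : ℤ, (shiftFunctor C n).Additive] [Pretriangulated C]

noncomputable def biprodIsoPiBool (f : Bool → C) : (f true ⊞ f false) ≅ ∏ᶜ f where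
  hom := Pi.lift fun b => Bool.rec (motive := fun b => f true ⊞ f false ⟶ f b)
    biprod.snd biprod.fst b
  inv := biprod.lift (Pi.π f true) (Pi.π f false)
  hom_inv_id := by apply biprod.hom_ext <;> simp
  inv_hom_id := by
    apply Pi.hom_ext
    rintro (_ | _) <;> simp

lemma biprod_distTriang (T₁ T₂ : Triangle C) (h₁ : T₁ ∈ distTriang C)
    (h₂ : T₂ ∈ distTriang C) :
    Triangle.mk (biprod.map T₁.mor₁ T₂.mor₁) (biprod.map T₁.mor₂ T₂.mor₂)
      (biprod.desc (T₁.mor₃ ≫ (shiftFunctor C (1 : ℤ)).map biprod.inl)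
        (T₂.mor₃ ≫ (shiftFunctor C (1 : ℤ)).map biprod.inr)) ∈ distTriang C := by
  let T : Bool → Triangle C := fun b => Bool.rec (motive := fun _ => Triangle C) T₂ T₁ b
  refine isomorphic_distinguished _
    (productTriangle_distinguished T (by rintro (_ | _) <;> assumption)) _ ?_
  refine Triangle.isoMk _ _ (biprodIsoPiBool fun b => (T b).obj₁)
    (biprodIsoPiBool fun b => (T b).obj₂) (biprodIsoPiBool fun b => (T b).obj₃) ?_ ?_ ?_
  · apply Pi.hom_ext
    rintro (_ | _) <;> simp [productTriangle, T, biprodIsoPiBool, Triangle.mk]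
  · apply Pi.hom_ext
    rintro (_ | _) <;> simp [productTriangle, T, biprodIsoPiBool, Triangle.mk]
  · refine (cancel_mono (piComparison (shiftFunctor C (1 : ℤ)) fun b => (T b).obj₁)).1 ?_
    simp only [productTriangle, Triangle.mk_mor₃]
    apply Pi.hom_ext
    rintro (_ | _) <;>
    · apply biprod.hom_ext' <;>
        simp [← Functor.map_comp, T, biprodIsoPiBool, Triangle.mk]

open ZeroObject in
lemma biprod_distTriang_of_obj₁ (T : Triangle C) (hT : T ∈ distTriang C) (z : C) :
    Triangle.mk (T.mor₁ ≫ biprod.inl) (biprod.map T.mor₂ (𝟙 z)) (biprod.desc T.mor₃ 0)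
      ∈ distTriang C := by
  have hsum : Triangle.mk (biprod.map T.mor₁ (0 : (0 : C) ⟶ z)) (biprod.map T.mor₂ (𝟙 z))
      (biprod.desc (T.mor₃ ≫ (shiftFunctor C (1 : ℤ)).map biprod.inl)
        ((0 : z ⟶ (0 : C)⟦(1 : ℤ)⟧) ≫ (shiftFunctor C (1 : ℤ)).map biprod.inr))
      ∈ distTriang C :=
    biprod_distTriang _ _ hT (contractible_distinguished₁ z)
  refine isomorphic_distinguished _ hsum _
    (Triangle.isoMk _ _ (isoBiprodZero (isZero_zero C)) (Iso.refl _) (Iso.refl _) ?_ ?_ ?_)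
  · simp [isoBiprodZero, Triangle.mk]
  · simp [Triangle.mk]
  · apply biprod.hom_ext' <;> simp [isoBiprodZero, Triangle.mk]

open ZeroObject in
lemma biprod_distTriang_of_obj₃ (T : Triangle C) (hT : T ∈ distTriang C) (z : C) :
    Triangle.mk (biprod.map T.mor₁ (𝟙 z)) (biprod.desc T.mor₂ 0)
      (T.mor₃ ≫ (shiftFunctor C (1 : ℤ)).map biprod.inl) ∈ distTriang C := by
  have hsum : Triangle.mk (biprod.map T.mor₁ (𝟙 z)) (biprod.map T.mor₂ (0 : z ⟶ 0))
      (biprod.desc (T.mor₃ ≫ (shiftFunctor C (1 : ℤ)).map biprod.inl)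
        ((0 : (0 : C) ⟶ z⟦(1 : ℤ)⟧) ≫ (shiftFunctor C (1 : ℤ)).map biprod.inr))
      ∈ distTriang C :=
    biprod_distTriang _ _ hT (contractible_distinguished z)
  refine isomorphic_distinguished _ hsum _
    (Triangle.isoMk _ _ (Iso.refl _) (Iso.refl _) (isoBiprodZero (isZero_zero C)) ?_ ?_ ?_)
  · simp [Triangle.mk]
  · apply biprod.hom_ext' <;> simp [isoBiprodZero, Triangle.mk]
  · simp [isoBiprodZero, Triangle.mk]

lemma nonempty_iso_obj₁_of_distTriang {T₁ T₂ : Triangle C} (h₁ : T₁ ∈ distTriang C)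
    (h₂ : T₂ ∈ distTriang C) (e₂ : T₁.obj₂ ≅ T₂.obj₂) (e₃ : T₁.obj₃ ≅ T₂.obj₃)
    (comm : T₁.mor₂ ≫ e₃.hom = e₂.hom ≫ T₂.mor₂) : Nonempty (T₁.obj₁ ≅ T₂.obj₁) :=
  ⟨(shiftFunctor C (1 : ℤ)).preimageIso <| Triangle.π₃.mapIso <|
    isoTriangleOfIso₁₂ _ _ (rot_of_distTriang _ h₁) (rot_of_distTriang _ h₂) e₂ e₃ comm⟩

end Triangles

def IsTPrecover (Tset : Set C) {x c : C} (f : x ⟶ c) : Prop :=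
  x ∈ Tset ∧ ∀ x' ∈ Tset, ∀ g : x' ⟶ c, ∃ h : x' ⟶ x, h ≫ f = g

namespace IsTCover

variable {Tset : Set C} {x c : C} {f : x ⟶ c}

lemma isTPrecover (hf : IsTCover Tset f) : IsTPrecover Tset f :=
  ⟨hf.1, hf.2.1⟩

lemma comp_iso (hf : IsTCover Tset f) {c' : C} (e : c ≅ c') : IsTCover Tset (f ≫ e.hom) := by
  refine ⟨hf.1, fun x' hx' g => ?_, fun φ hφ => hf.2.2 φ ?_⟩
  · obtain ⟨h, hh⟩ := hf.2.1 x' hx' (g ≫ e.inv)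
    exact ⟨h, by simp [reassoc_of% hh]⟩
  · simpa using hφ =≫ e.inv

lemma isIso_of_mem (hf : IsTCover Tset f) (hc : c ∈ Tset) : IsIso f := by
  obtain ⟨h, hh⟩ := hf.2.1 c hc (𝟙 c)
  have : IsIso (f ≫ h) := hf.2.2 _ (by rw [Category.assoc, hh, Category.comp_id])
  have hfh : f ≫ h = 𝟙 x := by
    rw [← cancel_epi (f ≫ h), Category.comp_id, Category.assoc, reassoc_of% hh]
  exact ⟨h, hfh, hh⟩

end IsTCover

section Split

variable [Preadditive C]

lemma exists_retract_complement [IsIdempotentComplete C] {x₁ x : C} (v : x₁ ⟶ x) (r : x ⟶ x₁)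
    (hvr : v ≫ r = 𝟙 x₁) : ∃ (z : C) (i : z ⟶ x) (p : x ⟶ z),
      i ≫ p = 𝟙 z ∧ v ≫ p = 0 ∧ i ≫ r = 0 ∧ r ≫ v + p ≫ i = 𝟙 x := by
  obtain ⟨z, i, p, hip, hpi⟩ := IsIdempotentComplete.idempotents_split x (𝟙 x - r ≫ v)
    (by simp [reassoc_of% hvr])
  refine ⟨z, i, p, hip, ?_, ?_, by rw [hpi]; abel⟩
  · have hv : v ≫ p ≫ i = 0 := by simp [hpi, reassoc_of% hvr]
    rw [← Category.comp_id (v ≫ p), ← hip, ← Category.assoc, Category.assoc v, hv, zero_comp]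
  · have hi : i ≫ (𝟙 x - r ≫ v) = i := by rw [← hpi, reassoc_of% hip]
    rw [← hi]
    simp only [Preadditive.sub_comp, Category.assoc, hvr, Category.comp_id, Category.id_comp,
      sub_self, comp_zero]

variable [HasFiniteBiproducts C]

attribute [local instance] hasBinaryBiproducts_of_finite_biproducts

lemma IsTPrecover.biprod_map_id {t x c : C} {f : x ⟶ c} (hf : IsTPrecover {x | inAdd t x} f)
    {z : C} (hz : inAdd t z) : IsTPrecover {x | inAdd t x} (biprod.map f (𝟙 z)) := by
  refine ⟨inAdd_biprod hf.1 hz, fun s hs u => ?_⟩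
  obtain ⟨h, hh⟩ := hf.2 s hs (u ≫ biprod.fst)
  exact ⟨biprod.lift h (u ≫ biprod.snd), by ext <;> simp [hh]⟩

lemma exists_iso_biprod_of_isTPrecover [IsIdempotentComplete C] {t x₁ x c : C} {f : x₁ ⟶ c}
    (hf : IsTCover {x | inAdd t x} f) {g : x ⟶ c} (hg : IsTPrecover {x | inAdd t x} g) :
    ∃ z : C, inAdd t z ∧ ∃ ψ : x ≅ x₁ ⊞ z, ψ.hom ≫ biprod.desc f 0 = g := by
  obtain ⟨u, hu⟩ := hf.2.1 x hg.1 g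
  obtain ⟨v, hv⟩ := hg.2 x₁ hf.1 f
  -- `v ≫ u` is an automorphism by minimality of `f`, so `v` is a split mono.
  have : IsIso (v ≫ u) := hf.2.2 _ (by rw [Category.assoc, hu, hv])
  obtain ⟨z, i, p, hip, hvp, hir, hsum⟩ :=
    exists_retract_complement v (u ≫ inv (v ≫ u)) (by rw [← Category.assoc, IsIso.hom_inv_id])
  have hf' : inv (v ≫ u) ≫ f = f := by
    rw [IsIso.inv_comp_eq, Category.assoc, hu, hv]
  refine ⟨z, inAdd_of_retract i p hip hg.1,
    ⟨biprod.lift (u ≫ inv (v ≫ u)) p, biprod.desc v i, by simpa using hsum, ?_⟩, ?_⟩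
  · have hvr : v ≫ u ≫ inv (v ≫ u) = 𝟙 x₁ := by rw [← Category.assoc, IsIso.hom_inv_id]
    ext <;> simp_all
  · simp [hf', hu]

end Split

section Index

variable [Preadditive C] [HasZeroObject C] [HasShift C ℤ]
  [∀ n : ℤ, (shiftFunctor C n).Additive] [Pretriangulated C] [HasFiniteBiproducts C]

attribute [local instance] hasBinaryBiproducts_of_finite_biproducts

variable {t : C} {A : Type*} [AddCommGroup A]

namespace IsAddOn

variable {cls : C → A}

lemma map_biprod (hcls : IsAddOn {x | inAdd t x} cls) {x y : C} (hx : inAdd t x)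
    (hy : inAdd t y) : cls (x ⊞ y) = cls x + cls y :=
  hcls.2 x y hx hy

lemma eq_of_iso (hcls : IsAddOn {x | inAdd t x} cls) {x y : C} (hx : inAdd t x)
    (hy : inAdd t y) (e : x ≅ y) : cls x = cls y :=
  hcls.1 x y hx hy ⟨e⟩

lemma eq_zero_of_isZero (hcls : IsAddOn {x | inAdd t x} cls) {x : C} (hx : IsZero x) :
    cls x = 0 := by
  have hx' : inAdd t x := inAdd_of_isZero hx
  have h : cls x = cls x + cls x := by
    rw [← hcls.map_biprod hx' hx']
    exact hcls.eq_of_iso hx' (inAdd_biprod hx' hx') (isoBiprodZero hx)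
  simpa using h

end IsAddOn

structure CoverTower (t : C) (m : ℕ) (c : C) where
  obj : ℕ → C
  tower : TriTower m obj
  iso : obj 0 ≅ c
  isTCover : ∀ i < m, IsTCover {x | inAdd t x} (tower.gmor i)
  top : inAdd t (obj (m + 1))

namespace CoverTower

variable {m : ℕ} {c : C}

def baseIso (G : CoverTower t m c) : G.tower.w 0 ≅ c :=
  eqToIso G.tower.w_zero ≪≫ G.iso

def zeroIso (G : CoverTower t 0 c) : G.obj 1 ≅ c :=
  eqToIso G.tower.w_top.symm ≪≫ G.baseIso

def ofIso (G : CoverTower t m c) {c' : C} (e : c ≅ c') : CoverTower t m c' :=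
  { G with iso := G.iso ≪≫ e }

def tail (G : CoverTower t (m + 1) c) : CoverTower t m (G.tower.w 1) where
  obj
    | 0 => G.tower.w 1
    | k + 1 => G.obj (k + 2)
  tower :=
    { w := fun i => G.tower.w (i + 1)
      fmor := fun i => G.tower.fmor (i + 1)
      gmor := fun i => G.tower.gmor (i + 1)
      hmor := fun i => G.tower.hmor (i + 1)
      mem := fun i hi => G.tower.mem (i + 1) (by omega)
      w_zero := rfl
      w_top := G.tower.w_top }
  iso := Iso.refl _
  isTCover := fun i hi => G.isTCover (i + 1) (by omega)
  top := G.top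

lemma isTCover_first (G : CoverTower t (m + 1) c) :
    IsTCover {x | inAdd t x} (G.tower.gmor 0 ≫ G.baseIso.hom) :=
  (G.isTCover 0 m.succ_pos).comp_iso _

lemma first_distTriang (G : CoverTower t (m + 1) c) :
    Triangle.mk (G.tower.fmor 0) (G.tower.gmor 0 ≫ G.baseIso.hom)
      (G.baseIso.inv ≫ G.tower.hmor 0) ∈ distTriang C := by
  refine isomorphic_distinguished _ (G.tower.mem 0 m.succ_pos) _
    (Triangle.isoMk _ _ (Iso.refl _) (Iso.refl _) G.baseIso.symm ?_ ?_ ?_) <;>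
    simp [Triangle.mk]

def altSum (G : CoverTower t m c) (cls : C → A) : A :=
  ∑ i ∈ Finset.range (m + 1), ((-1 : ℤ) ^ i) • cls (G.obj (i + 1))

lemma altSum_zero (G : CoverTower t 0 c) (cls : C → A) : G.altSum cls = cls (G.obj 1) := by
  simp [altSum]

lemma altSum_succ (G : CoverTower t (m + 1) c) (cls : C → A) :
    G.altSum cls = cls (G.obj 1) - G.tail.altSum cls := by
  simp only [altSum, Finset.sum_range_succ', pow_succ, mul_neg_one, neg_smul, one_smul,
    Finset.sum_neg_distrib, pow_zero, zero_add, sub_eq_neg_add]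
  rfl

lemma altSum_eq_of_inAdd {cls : C → A} (hcls : IsAddOn {x | inAdd t x} cls)
    (G : CoverTower t m c) (hc : inAdd t c) : G.altSum cls = cls c := by
  induction m generalizing c with
  | zero => rw [altSum_zero, hcls.eq_of_iso G.top hc G.zeroIso]
  | succ m ih =>
    have hf := G.isTCover_first
    have hiso := hf.isIso_of_mem hc
    have hw : IsZero (G.tower.w 1) := Triangle.isZero₁_of_isIso₂ _ G.first_distTriang hiso
    rw [altSum_succ, ih G.tail (inAdd_of_isZero hw), hcls.eq_zero_of_isZero hw, sub_zero,
      hcls.eq_of_iso hf.1 hc (asIso (G.tower.gmor 0 ≫ G.baseIso.hom))]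

lemma exists_iso_biprod_of_distTriang [IsIdempotentComplete C] (G : CoverTower t (m + 1) c)
    {y x : C} {a : y ⟶ x} {g : x ⟶ c} {δ : c ⟶ y⟦(1 : ℤ)⟧}
    (htri : Triangle.mk a g δ ∈ distTriang C) (hg : IsTPrecover {x | inAdd t x} g) :
    ∃ z : C, inAdd t z ∧ Nonempty (x ≅ G.obj 1 ⊞ z) ∧ Nonempty (y ≅ G.tower.w 1 ⊞ z) := by
  obtain ⟨z, hz, ψ, hψ⟩ := exists_iso_biprod_of_isTPrecover G.isTCover_first hg
  obtain ⟨ι⟩ := nonempty_iso_obj₁_of_distTriang htri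
    (biprod_distTriang_of_obj₃ _ G.first_distTriang z) ψ (Iso.refl c)
    ((Category.comp_id g).trans hψ.symm)
  exact ⟨z, hz, ⟨ψ⟩, ⟨ι⟩⟩

end CoverTower

variable {cls : C → A}

lemma isTPrecover_of_comp_eq_zero {y x c : C} {a : y ⟶ x} {g : x ⟶ c} {δ : c ⟶ y⟦(1 : ℤ)⟧}
    (htri : Triangle.mk a g δ ∈ distTriang C) (hx : inAdd t x)
    (hδ : ∀ h : t ⟶ c, h ≫ δ = 0) : IsTPrecover {x | inAdd t x} g := by
  refine ⟨hx, fun s hs u => ?_⟩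
  obtain ⟨h, hh⟩ := Triangle.coyoneda_exact₃ _ htri u (comp_eq_zero_of_inAdd hδ hs u)
  exact ⟨h, hh.symm⟩

lemma cls_eq_add_of_isTPrecover_of_inAdd (hcls : IsAddOn {x | inAdd t x} cls)
    {y x c : C} {a : y ⟶ x} {g : x ⟶ c} {δ : c ⟶ y⟦(1 : ℤ)⟧}
    (htri : Triangle.mk a g δ ∈ distTriang C) (hg : IsTPrecover {x | inAdd t x} g)
    (hc : inAdd t c) : inAdd t y ∧ cls x = cls y + cls c := by
  obtain ⟨h, hh⟩ := hg.2 c hc (𝟙 c)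
  have hδ : δ = 0 := by
    have hgδ : g ≫ δ = 0 := comp_distTriang_mor_zero₂₃ _ htri
    rw [← Category.id_comp δ, ← hh, Category.assoc, hgδ, comp_zero]
  have e : x ≅ y ⊞ c := (exists_iso_binaryBiproduct_of_distTriang _ htri hδ).choose
  have hy : inAdd t y := inAdd_of_retract (biprod.inl ≫ e.inv) (e.hom ≫ biprod.fst)
    (by simp) hg.1
  exact ⟨hy, by rw [hcls.eq_of_iso hg.1 (inAdd_biprod hy hc) e, hcls.map_biprod hy hc]⟩

theorem cls_eq_altSum_add_altSum [IsIdempotentComplete C] (hcls : IsAddOn {x | inAdd t x} cls)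
    {y x c : C} {a : y ⟶ x} {g : x ⟶ c} {δ : c ⟶ y⟦(1 : ℤ)⟧}
    (htri : Triangle.mk a g δ ∈ distTriang C) (hg : IsTPrecover {x | inAdd t x} g)
    {p q : ℕ} (Gc : CoverTower t p c) (Gy : CoverTower t q y) :
    cls x = Gy.altSum cls + Gc.altSum cls := by
  cases p with
  | zero =>
    have hc : inAdd t c := inAdd_of_iso Gc.zeroIso Gc.top
    obtain ⟨hy, hx⟩ := cls_eq_add_of_isTPrecover_of_inAdd hcls htri hg hc
    rw [hx, Gy.altSum_eq_of_inAdd hcls hy, Gc.altSum_eq_of_inAdd hcls hc]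
  | succ p =>
    obtain ⟨z, hz, ⟨ψ⟩, ⟨ι⟩⟩ := Gc.exists_iso_biprod_of_distTriang htri hg
    have hc₁ : inAdd t (Gc.obj 1) := Gc.isTCover_first.1
    rw [hcls.eq_of_iso hg.1 (inAdd_biprod hc₁ hz) ψ, hcls.map_biprod hc₁ hz, Gc.altSum_succ]
    suffices Gy.altSum cls = Gc.tail.altSum cls + cls z by rw [this]; abel
    cases p with
    | zero =>
      have hw : inAdd t (Gc.tower.w 1) := Gc.tower.w_top ▸ Gc.top
      have hy : inAdd t y := inAdd_of_iso ι.symm (inAdd_biprod hw hz)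
      rw [Gy.altSum_eq_of_inAdd hcls hy, Gc.tail.altSum_eq_of_inAdd hcls hw,
        hcls.eq_of_iso hy (inAdd_biprod hw hz) ι, hcls.map_biprod hw hz]
    | succ p =>
      -- The next triangle `w₂ ⟶ t₁ ⟶ w₁` plus `z ⟶ z` ends in `w₁ ⊞ z ≅ y`: now the tower of `y`
      -- is the one being shortened, hence the induction on `p + q`.
      have hc₂ : inAdd t (Gc.tail.obj 1) := (Gc.tail.isTCover 0 p.succ_pos).1
      have key : cls (Gc.tail.obj 1 ⊞ z) = Gc.tail.tail.altSum cls + Gy.altSum cls :=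
        cls_eq_altSum_add_altSum hcls
          (biprod_distTriang_of_obj₁ _ (Gc.tail.tower.mem 0 p.succ_pos) z)
          ((Gc.tail.isTCover 0 p.succ_pos).isTPrecover.biprod_map_id hz)
          (Gy.ofIso ι) Gc.tail.tail
      rw [hcls.map_biprod hc₂ hz] at key
      rw [Gc.tail.altSum_succ, sub_add_eq_add_sub, eq_sub_iff_add_eq', ← key]
termination_by p + q

lemma IsIndex.exists_coverTower {n : ℕ} {ind : C → A}
    (hind : IsIndex n {x | inAdd t x} cls ind) (hn : 1 ≤ n) (c : C) :
    ∃ G : CoverTower t (n - 1) c, ind c = G.altSum cls := by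
  obtain ⟨m, rfl⟩ : ∃ m, n = m + 1 := ⟨n - 1, by omega⟩
  obtain ⟨obj, tower, h0, hcov, htop, hsum⟩ := hind c
  exact ⟨⟨obj, tower, eqToIso h0, hcov, htop⟩, hsum⟩

end Index

theorem stmt8 (k : Type*) [Field k] [Preadditive C] [CategoryTheory.Linear k C] [HasZeroObject C]
    [HasShift C ℤ] [∀ n : ℤ, (shiftFunctor C n).Additive] [Pretriangulated C]
    [HasFiniteBiproducts C] [IsIdempotentComplete C]
    [∀ X Y : C, FiniteDimensional k (X ⟶ Y)]
    (n : ℕ) (hn : 2 ≤ n) (t : C) (ht : IsClusterTiltingObj n t)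
    {G : Type*} [AddCommGroup G] (cls ind : C → G)
    (hcls : IsAddOn {x : C | inAdd t x} cls)
    (hind : IsIndex n {x : C | inAdd t x} cls ind)
    (c' tc c : C) (α : c' ⟶ tc) (τ : tc ⟶ c) (δ : c ⟶ c'⟦(1 : ℤ)⟧)
    (htri : Triangle.mk α τ δ ∈ distTriang C) (htc : inAdd t tc)
    (hδ : ∀ g : t ⟶ c, g ≫ δ = 0) :
    cls tc = ind c' + ind c := by
  obtain ⟨Gc', hc'⟩ := hind.exists_coverTower (by omega) c'
  obtain ⟨Gc, hc⟩ := hind.exists_coverTower (by omega) c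
  rw [hc', hc]
  exact cls_eq_altSum_add_altSum hcls htri (isTPrecover_of_comp_eq_zero htri htc hδ) Gc Gc'
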